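/- arXiv:2309.10448 — 2 statements merged into one kernel-verified Lean document; each statement's English description precedes it below -/
import Mathlib

section
/- Fix d ≥ 0 and σ_U > 0, and define h : (0, ∞) → ℝ by h(a) = σ_U²·(a² + σ_U²·d²)/(a + σ_U²)², the expected fidelity error as a function of the AI prior variance a = σ_A². Then h is strictly decreasing on (0, d²) and strictly increasing on (d², ∞). That is, for a fixed signal noise level, shrinking the AI prior variance (censoring) strictly reduces the fidelity error of users with σ_A² > (μ_A − θ)² and strictly increases that of users with σ_A² < (μ_A − θ)². -/
open Set

/-- `c` plays the role of the signal noise variance `σ_U²` and `D` that of `d²`. -/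
noncomputable def fidelityError (c D a : ℝ) : ℝ :=
  c * (a ^ 2 + c * D) / (a + c) ^ 2

lemma fidelityError_sub_fidelityError (c D a b : ℝ) (ha : a + c ≠ 0) (hb : b + c ≠ 0) :
    fidelityError c D b - fidelityError c D a =
      c ^ 2 * (b - a) * ((a - D) * (b + c) + (b - D) * (a + c)) / ((a + c) ^ 2 * (b + c) ^ 2) := by
  unfold fidelityError
  field_simp
  ring

lemma fidelityError_strictAntiOn {c : ℝ} (D : ℝ) (hc : 0 < c) :
    StrictAntiOn (fidelityError c D) (Ioo 0 D) := by
  rintro a ⟨ha₀, haD⟩ b ⟨hb₀, hbD⟩ hab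
  have hac : 0 < a + c := by linarith
  have hbc : 0 < b + c := by linarith
  rw [← sub_neg, fidelityError_sub_fidelityError c D a b hac.ne' hbc.ne']
  refine div_neg_of_neg_of_pos (mul_neg_of_pos_of_neg (mul_pos (pow_pos hc 2) (sub_pos.2 hab)) ?_)
    (by positivity)
  exact add_neg (mul_neg_of_neg_of_pos (by linarith) hbc) (mul_neg_of_neg_of_pos (by linarith) hac)

lemma fidelityError_strictMonoOn {c D : ℝ} (hc : 0 < c) (hD : 0 ≤ D) :
    StrictMonoOn (fidelityError c D) (Ioi D) := by
  rintro a (haD : D < a) b (hbD : D < b) hab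
  have hac : 0 < a + c := by linarith
  have hbc : 0 < b + c := by linarith
  rw [← sub_pos, fidelityError_sub_fidelityError c D a b hac.ne' hbc.ne']
  refine div_pos (mul_pos (mul_pos (pow_pos hc 2) (sub_pos.2 hab)) ?_) (by positivity)
  exact add_pos (mul_pos (by linarith) hbc) (mul_pos (by linarith) hac)

theorem fidelity_error_in_prior_variance_general (d σU : ℝ) (hU : 0 < σU)
    (h : ℝ → ℝ) (hh : ∀ a, h a = σU ^ 2 * (a ^ 2 + σU ^ 2 * d ^ 2) / (a + σU ^ 2) ^ 2) :
    StrictAntiOn h (Set.Ioo 0 (d ^ 2)) ∧ StrictMonoOn h (Set.Ioi (d ^ 2)) := by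
  obtain rfl : h = fidelityError (σU ^ 2) (d ^ 2) := funext hh
  exact ⟨fidelityError_strictAntiOn _ (by positivity),
    fidelityError_strictMonoOn (by positivity) (sq_nonneg d)⟩

/-- Effect of the AI prior variance on the fidelity error: for fixed signal
noise `σU` and uniqueness `d`, the expected fidelity error
`h(a) = σU²(a² + σU²d²)/(a + σU²)²`, as a function of the AI prior variance
`a = σA²`, is strictly decreasing on `(0, d²)` and strictly increasing on
`(d², ∞)`. -/
theorem fidelity_error_in_prior_variance (d σU : ℝ) (hd : 0 ≤ d) (hU : 0 < σU)
    (h : ℝ → ℝ) (hh : ∀ a, h a = σU ^ 2 * (a ^ 2 + σU ^ 2 * d ^ 2) / (a + σU ^ 2) ^ 2) :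
    StrictAntiOn h (Set.Ioo 0 (d ^ 2)) ∧ StrictMonoOn h (Set.Ioi (d ^ 2)) :=
  fidelity_error_in_prior_variance_general d σU hU h hh
end

section
/- Fix μ ∈ ℝ and σ, σ_A, γ > 0, and define V(d) = min( d², inf_{σ_U ∈ (0,∞)} [ σ_U²(σ_A⁴ + σ_U²·d²)/(σ_A² + σ_U²)² + (γ/2)·ln((σ² + σ_U²)/σ_U²) ] ) for d ≥ 0. Define the expected population utility loss PL(μ_A) = ∫ V(|μ_A − θ|) dN(μ, σ²)(θ). Then PL is uniquely minimized at μ_A = μ: for every μ_A ≠ μ, PL(μ_A) > PL(μ). That is, any directional bias of the AI prior mean strictly increases the population's expected utility loss. -/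
/-!
Write `s = d²` and `u = σ_U`. The loss of a signal is affine in `s` with slope
`(u² / (σA² + u²))² ∈ [0, 1]` and tends to `s` as `u → ∞`; hence `V d = h (d²)`, where `h` is the
infimum over signals, and `h` is strictly increasing on `[0, ∞)`. So `θ ↦ V |μA - θ|` is a strictly
increasing function of the distance from `μA`, and moving the centre of such a loss away from the
mode of a symmetric, strictly unimodal density (here the Gaussian) strictly increases its
expectation.
-/

open MeasureTheory ProbabilityTheory Filter Set Topology
open scoped NNReal

noncomputable def signalLoss (σ σA γ s u : ℝ) : ℝ :=
  u ^ 2 * (σA ^ 4 + u ^ 2 * s) / (σA ^ 2 + u ^ 2) ^ 2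
    + γ / 2 * Real.log ((σ ^ 2 + u ^ 2) / u ^ 2)

noncomputable def optimalSignalLoss (σ σA γ s : ℝ) : ℝ :=
  ⨅ u : Ioi (0 : ℝ), signalLoss σ σA γ s u

section SignalLoss

variable {σ σA γ : ℝ}

lemma signalLoss_eq_add_mul (σ σA γ s u : ℝ) :
    signalLoss σ σA γ s u = signalLoss σ σA γ 0 u + (u ^ 2 / (σA ^ 2 + u ^ 2)) ^ 2 * s := by
  simp only [signalLoss, div_pow]
  field_simp
  ring

lemma sq_div_sq_add_sq_mem_Icc (σA u : ℝ) : u ^ 2 / (σA ^ 2 + u ^ 2) ∈ Icc 0 1 := by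
  refine ⟨by positivity, div_le_one_of_le₀ (by nlinarith [sq_nonneg σA]) (by positivity)⟩

lemma monotoneOn_sq_div_sq_add_sq (σA : ℝ) :
    MonotoneOn (fun u : ℝ ↦ u ^ 2 / (σA ^ 2 + u ^ 2)) (Ioi 0) := by
  intro u (hu : 0 < u) v (hv : 0 < v) huv
  rw [div_le_div_iff₀ (by positivity) (by positivity)]
  nlinarith [pow_le_pow_left₀ hu.le huv 2, sq_nonneg σA]

lemma signalLoss_zero_nonneg (hγ : 0 ≤ γ) {u : ℝ} (hu : 0 < u) : 0 ≤ signalLoss σ σA γ 0 u := by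
  have : 1 ≤ (σ ^ 2 + u ^ 2) / u ^ 2 := by
    rw [le_div_iff₀ (by positivity)]; nlinarith [sq_nonneg σ]
  unfold signalLoss
  have := Real.log_nonneg this
  positivity

lemma min_le_signalLoss (hγ : 0 ≤ γ) (s : ℝ) {u : ℝ} (hu : 0 < u) :
    min s 0 ≤ signalLoss σ σA γ s u := by
  obtain ⟨hw0, hw1⟩ := sq_div_sq_add_sq_mem_Icc σA u
  have hw : (u ^ 2 / (σA ^ 2 + u ^ 2)) ^ 2 ∈ Icc (0 : ℝ) 1 := ⟨by positivity, pow_le_one₀ hw0 hw1⟩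
  rw [signalLoss_eq_add_mul]
  have := signalLoss_zero_nonneg (σ := σ) (σA := σA) hγ hu
  rcases le_total 0 s with hs | hs
  · nlinarith [min_le_right s 0, hw.1]
  · nlinarith [min_le_left s 0, hw.2]

lemma bddBelow_range_signalLoss (hγ : 0 ≤ γ) (s : ℝ) :
    BddBelow (range fun u : Ioi (0 : ℝ) ↦ signalLoss σ σA γ s u) :=
  ⟨min s 0, by rintro _ ⟨u, rfl⟩; exact min_le_signalLoss hγ s u.2⟩

lemma optimalSignalLoss_le (hγ : 0 ≤ γ) (s : ℝ) {u : ℝ} (hu : 0 < u) :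
    optimalSignalLoss σ σA γ s ≤ signalLoss σ σA γ s u :=
  ciInf_le (bddBelow_range_signalLoss hγ s) ⟨u, hu⟩

/-- In terms of `w = u⁻²` the loss is a function continuous at `w = 0`, with value `s` there. -/
lemma tendsto_signalLoss_atTop (σ σA γ s : ℝ) :
    Tendsto (signalLoss σ σA γ s) atTop (𝓝 s) := by
  set Φ : ℝ → ℝ := fun w ↦ σA ^ 4 * w / (σA ^ 2 * w + 1) ^ 2 + s / (σA ^ 2 * w + 1) ^ 2
    + γ / 2 * Real.log (σ ^ 2 * w + 1)
  have hΦ : ContinuousAt Φ 0 := by fun_prop (disch := norm_num)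
  have hw : Tendsto (fun u : ℝ ↦ (u ^ 2)⁻¹) atTop (𝓝 0) :=
    (tendsto_pow_atTop two_ne_zero).inv_tendsto_atTop
  have := (hΦ.tendsto.comp hw)
  simp only [Φ, mul_zero, zero_add, one_pow, div_one, Real.log_one, add_zero] at this
  refine this.congr' ?_
  filter_upwards [eventually_ne_atTop 0] with u hu
  simp only [Function.comp, signalLoss]
  have e : σ ^ 2 * (u ^ 2)⁻¹ + 1 = (σ ^ 2 + u ^ 2) / u ^ 2 := by field_simp
  rw [e]
  field_simp

lemma optimalSignalLoss_le_self (hγ : 0 ≤ γ) (s : ℝ) : optimalSignalLoss σ σA γ s ≤ s :=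
  ge_of_tendsto (tendsto_signalLoss_atTop σ σA γ s)
    (eventually_gt_atTop 0 |>.mono fun _ hu ↦ optimalSignalLoss_le hγ s hu)

lemma optimalSignalLoss_nonneg (hγ : 0 ≤ γ) {s : ℝ} (hs : 0 ≤ s) : 0 ≤ optimalSignalLoss σ σA γ s :=
  le_ciInf fun u ↦ (min_eq_right hs).symm.le.trans (min_le_signalLoss hγ s u.2)

lemma monotone_optimalSignalLoss (hγ : 0 ≤ γ) : Monotone (optimalSignalLoss σ σA γ) := by
  intro s₁ s₂ hs
  refine ciInf_mono (bddBelow_range_signalLoss hγ s₁) fun u ↦ ?_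
  rw [signalLoss_eq_add_mul _ _ _ s₁, signalLoss_eq_add_mul _ _ _ s₂]
  gcongr

lemma tendsto_log_add_sq_div_sq_nhdsGT_zero (hσ : σ ≠ 0) :
    Tendsto (fun u : ℝ ↦ Real.log ((σ ^ 2 + u ^ 2) / u ^ 2)) (𝓝[>] 0) atTop := by
  have hinv : Tendsto (fun u : ℝ ↦ σ ^ 2 * (u⁻¹) ^ 2 + 1) (𝓝[>] 0) atTop :=
    tendsto_atTop_add_const_right _ _ <|
      ((tendsto_pow_atTop two_ne_zero).comp tendsto_inv_nhdsGT_zero).const_mul_atTop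
        (sq_pos_iff.2 hσ)
  refine (Real.tendsto_log_atTop.comp hinv).congr' ?_
  filter_upwards [self_mem_nhdsWithin] with u (hu : 0 < u)
  simp only [Function.comp]
  rw [show (σ ^ 2 + u ^ 2) / u ^ 2 = σ ^ 2 * u⁻¹ ^ 2 + 1 by field_simp]

/-- The communication cost blows up for very precise signals, so near-optimal signals have
noise bounded below, and hence a fidelity weight `(u² / (σA² + u²))²` bounded below. -/
theorem strictMonoOn_optimalSignalLoss (hσ : σ ≠ 0) (hγ : 0 < γ) :
    StrictMonoOn (optimalSignalLoss σ σA γ) (Ici 0) := by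
  intro s₁ (hs₁ : 0 ≤ s₁) s₂ _ hs
  have hcost := (tendsto_log_add_sq_div_sq_nhdsGT_zero hσ).const_mul_atTop (half_pos hγ)
  obtain ⟨ε, hε : 0 < ε, hsmall⟩ :=
    mem_nhdsGT_iff_exists_Ioo_subset.1 (hcost.eventually_ge_atTop s₂)
  set w : ℝ → ℝ := fun u ↦ (u ^ 2 / (σA ^ 2 + u ^ 2)) ^ 2
  have hc : 0 < w (ε / 2) := by positivity
  have hc1 : w (ε / 2) * (s₂ - s₁) ≤ s₂ - s₁ :=
    mul_le_of_le_one_left (by linarith)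
      (pow_le_one₀ (sq_div_sq_add_sq_mem_Icc σA _).1 (sq_div_sq_add_sq_mem_Icc σA _).2)
  suffices h : ∀ u : Ioi (0 : ℝ), optimalSignalLoss σ σA γ s₁ + w (ε / 2) * (s₂ - s₁)
      ≤ signalLoss σ σA γ s₂ u by
    have : optimalSignalLoss σ σA γ s₁ + w (ε / 2) * (s₂ - s₁) ≤ optimalSignalLoss σ σA γ s₂ :=
      le_ciInf h
    nlinarith [mul_pos hc (sub_pos.2 hs)]
  rintro ⟨u, hu : 0 < u⟩
  rcases lt_or_ge u (ε / 2) with hlt | hge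
  · have hlog : s₂ ≤ γ / 2 * Real.log ((σ ^ 2 + u ^ 2) / u ^ 2) := hsmall ⟨hu, by linarith⟩
    have hfid : 0 ≤ u ^ 2 * (σA ^ 4 + u ^ 2 * s₂) / (σA ^ 2 + u ^ 2) ^ 2 := by
      have : 0 ≤ s₂ := by linarith
      positivity
    have := optimalSignalLoss_le_self (σ := σ) (σA := σA) hγ.le s₁
    unfold signalLoss
    linarith
  · have hw : w (ε / 2) ≤ w u := pow_le_pow_left₀ (by positivity)
      (monotoneOn_sq_div_sq_add_sq σA (by positivity : (0 : ℝ) < ε / 2) hu hge) 2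
    have h₁ := optimalSignalLoss_le (σ := σ) (σA := σA) hγ.le s₁ hu
    rw [signalLoss_eq_add_mul] at h₁ ⊢
    nlinarith

end SignalLoss

lemma StrictMonoOn.mul_sub_pos_of_strictAntiOn {α : Type*} [LinearOrder α] {s : Set α}
    {f g : α → ℝ} (hf : StrictMonoOn f s) (hg : StrictAntiOn g s) {x y : α} (hx : x ∈ s)
    (hy : y ∈ s) (hxy : x ≠ y) : 0 < (f y - f x) * (g x - g y) := by
  rcases hxy.lt_or_gt with h | h
  · exact mul_pos (sub_pos.2 (hf hx hy h)) (sub_pos.2 (hg hx hy h))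
  · exact mul_pos_of_neg_of_neg (sub_neg.2 (hf hy hx h)) (sub_neg.2 (hg hy hx h))

lemma eq_half_of_abs_eq_abs_sub {x t : ℝ} (ht : t ≠ 0) (h : |x| = |x - t|) : x = t / 2 := by
  rcases abs_eq_abs.1 h with h | h
  · exact absurd (by linarith) ht
  · linarith

/-- With `k x = G|x| F|x - t| - G|x| F|x|`, the function `(F|x - t| - F|x|) (G|x| - G|x - t|)`,
which is positive for `x ≠ t / 2`, equals `k x + k (t - x)`; its integral is `2 ∫ k`. -/
theorem integral_mul_abs_lt_integral_mul_abs_sub {F G : ℝ → ℝ} (hF : StrictMonoOn F (Ici 0))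
    (hG : StrictAntiOn G (Ici 0)) {t : ℝ} (ht : t ≠ 0)
    (h₀ : Integrable fun x ↦ G |x| * F |x|) (hₜ : Integrable fun x ↦ G |x| * F |x - t|) :
    ∫ x, G |x| * F |x| < ∫ x, G |x| * F |x - t| := by
  set k : ℝ → ℝ := fun x ↦ G |x| * F |x - t| - G |x| * F |x|
  have hk : Integrable k := hₜ.sub h₀
  set D : ℝ → ℝ := fun x ↦ (F |x - t| - F |x|) * (G |x| - G |x - t|)
  have hD : D = fun x ↦ k x + k (t - x) := by
    ext x
    simp only [D, k, sub_sub_cancel_left, abs_neg, abs_sub_comm t x]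
    ring
  have hD_pos : ∀ x, x ≠ t / 2 → 0 < D x := fun x hx ↦
    hF.mul_sub_pos_of_strictAntiOn hG (abs_nonneg x) (abs_nonneg (x - t))
      (mt (eq_half_of_abs_eq_abs_sub ht) hx)
  have hD_nonneg : 0 ≤ D := by
    intro x
    by_cases hx : x = t / 2
    · simp [D, hx, show t / 2 - t = -(t / 2) by ring]
    · exact (hD_pos x hx).le
  have hD_int : Integrable D := hD ▸ hk.add (hk.comp_sub_left t)
  have : 0 < ∫ x, D x := by
    refine (integral_pos_iff_support_of_nonneg hD_nonneg hD_int).2 ?_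
    have hsupp : Ioi (t / 2) ⊆ Function.support D := fun x hx ↦ (hD_pos x (ne_of_gt hx)).ne'
    exact (measure_mono hsupp).trans_lt' (by simp)
  rw [hD, integral_add hk (hk.comp_sub_left t), integral_sub_left_eq_self k volume t,
    integral_sub hₜ h₀] at this
  linarith

lemma gaussianPDFReal_zero_abs (v : ℝ≥0) (x : ℝ) :
    gaussianPDFReal 0 v |x| = gaussianPDFReal 0 v x := by
  simp [gaussianPDFReal]

lemma strictAntiOn_gaussianPDFReal_zero {v : ℝ≥0} (hv : v ≠ 0) :
    StrictAntiOn (gaussianPDFReal 0 v) (Ici 0) := by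
  intro x (hx : 0 ≤ x) y _ hxy
  have : 0 < (v : ℝ) := by positivity
  simp only [gaussianPDFReal, sub_zero]
  gcongr

theorem integral_abs_sub_lt_gaussianReal_zero {v : ℝ≥0} (hv : v ≠ 0) {F : ℝ → ℝ}
    (hF : StrictMonoOn F (Ici 0)) {t : ℝ} (ht : t ≠ 0)
    (h₀ : Integrable (fun x ↦ F |x|) (gaussianReal 0 v))
    (hₜ : Integrable (fun x ↦ F |x - t|) (gaussianReal 0 v)) :
    ∫ x, F |x| ∂gaussianReal 0 v < ∫ x, F |x - t| ∂gaussianReal 0 v := by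
  have hdens {f : ℝ → ℝ} (hf : Integrable f (gaussianReal 0 v)) :
      Integrable fun x ↦ gaussianPDFReal 0 v |x| * f x := by
    rw [gaussianReal_of_var_ne_zero 0 hv, integrable_withDensity_iff_integrable_smul'
      (measurable_gaussianPDF 0 v) (ae_of_all _ fun _ ↦ gaussianPDF_lt_top)] at hf
    simpa [gaussianPDFReal_zero_abs] using hf
  have hint (f : ℝ → ℝ) :
      ∫ x, f x ∂gaussianReal 0 v = ∫ x, gaussianPDFReal 0 v |x| * f x := by
    simp_rw [integral_gaussianReal_eq_integral_smul hv, gaussianPDFReal_zero_abs, smul_eq_mul]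
  rw [hint, hint]
  exact integral_mul_abs_lt_integral_mul_abs_sub hF (strictAntiOn_gaussianPDFReal_zero hv) ht
    (hdens h₀) (hdens hₜ)

lemma integral_gaussianReal_eq_integral_add (μ : ℝ) (v : ℝ≥0) (f : ℝ → ℝ) :
    ∫ θ, f θ ∂gaussianReal μ v = ∫ x, f (x + μ) ∂gaussianReal 0 v := by
  rw [← (measurableEmbedding_addRight μ).integral_map, gaussianReal_map_add_const, zero_add]

lemma integrable_abs_sub_gaussianReal {F : ℝ → ℝ} (hF : Measurable F) (hle : ∀ y, |F y| ≤ y ^ 2)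
    (μ : ℝ) (v : ℝ≥0) (t : ℝ) : Integrable (fun x ↦ F |x - t|) (gaussianReal μ v) := by
  refine Integrable.mono' ((memLp_id_gaussianReal 2).sub (memLp_const t)).integrable_sq
    (hF.comp (by fun_prop)).aestronglyMeasurable (ae_of_all _ fun x ↦ ?_)
  simpa [sq_abs] using hle |x - t|

theorem directional_bias_population_loss_general (μ σ σA γ : ℝ) (hσ : 0 < σ)
    (hγ : 0 < γ)
    (V : ℝ → ℝ)
    (hV : ∀ d, V d = min (d ^ 2)
      (⨅ σU : Set.Ioi (0 : ℝ),
        (σU : ℝ) ^ 2 * (σA ^ 4 + (σU : ℝ) ^ 2 * d ^ 2) / (σA ^ 2 + (σU : ℝ) ^ 2) ^ 2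
          + γ / 2 * Real.log ((σ ^ 2 + (σU : ℝ) ^ 2) / (σU : ℝ) ^ 2)))
    (PL : ℝ → ℝ)
    (hPL : ∀ μA, PL μA = ∫ θ, V |μA - θ| ∂(gaussianReal μ (Real.toNNReal (σ ^ 2)))) :
    ∀ μA : ℝ, μA ≠ μ → PL μ < PL μA := by
  intro μA hne
  have hVeq : V = fun d ↦ optimalSignalLoss σ σA γ (d ^ 2) :=
    funext fun d ↦ (hV d).trans (min_eq_right (optimalSignalLoss_le_self hγ.le _))
  have hVmono : StrictMonoOn V (Ici 0) := hVeq ▸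
    (strictMonoOn_optimalSignalLoss hσ.ne' hγ).comp
      (fun a ha b _ hab ↦ pow_lt_pow_left₀ hab ha two_ne_zero) fun d _ ↦ sq_nonneg d
  have hVmeas : Measurable V := hVeq ▸
    (monotone_optimalSignalLoss hγ.le).measurable.comp (measurable_id.pow_const 2)
  have hVle (d : ℝ) : |V d| ≤ d ^ 2 := by
    rw [hVeq, abs_of_nonneg (optimalSignalLoss_nonneg hγ.le (sq_nonneg d))]
    exact optimalSignalLoss_le_self hγ.le _
  have hPL' (m : ℝ) : PL m = ∫ x, V |x - (m - μ)| ∂gaussianReal 0 (Real.toNNReal (σ ^ 2)) := by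
    rw [hPL, integral_gaussianReal_eq_integral_add]
    congr 1 with x
    rw [abs_sub_comm, sub_sub_eq_add_sub, add_sub_right_comm]
  have hv : Real.toNNReal (σ ^ 2) ≠ 0 := (Real.toNNReal_pos.2 (by positivity)).ne'
  rw [hPL', hPL', sub_self]
  simpa using integral_abs_sub_lt_gaussianReal_zero hv hVmono (sub_ne_zero.2 hne)
    (by simpa using integrable_abs_sub_gaussianReal hVmeas hVle 0 _ 0)
    (integrable_abs_sub_gaussianReal hVmeas hVle 0 _ (μA - μ))

/-- Directional bias strictly hurts population utility: with optimal utility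
loss `V(d)` depending on a user's preference only through her distance `d`
from the AI prior mean, the expected population utility loss
`PL(μA) = ∫ V(|μA − θ|) dN(μ, σ²)(θ)` is uniquely minimized at `μA = μ`:
for every `μA ≠ μ`, `PL(μA) > PL(μ)`. -/
theorem directional_bias_population_loss (μ σ σA γ : ℝ) (hσ : 0 < σ) (hA : 0 < σA)
    (hγ : 0 < γ)
    (V : ℝ → ℝ)
    (hV : ∀ d, V d = min (d ^ 2)
      (⨅ σU : Set.Ioi (0 : ℝ),
        (σU : ℝ) ^ 2 * (σA ^ 4 + (σU : ℝ) ^ 2 * d ^ 2) / (σA ^ 2 + (σU : ℝ) ^ 2) ^ 2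
          + γ / 2 * Real.log ((σ ^ 2 + (σU : ℝ) ^ 2) / (σU : ℝ) ^ 2)))
    (PL : ℝ → ℝ)
    (hPL : ∀ μA, PL μA = ∫ θ, V |μA - θ| ∂(gaussianReal μ (Real.toNNReal (σ ^ 2)))) :
    ∀ μA : ℝ, μA ≠ μ → PL μ < PL μA :=
  directional_bias_population_loss_general μ σ σA γ hσ hγ V hV PL hPL
end
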